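/- arXiv:2104.04455 — 5 statements merged into one kernel-verified Lean document; each statement's English description precedes it below -/
import Mathlib

section
/- Let Z be a nonempty finite set, a̲ ∈ [0,1], A = [a̲,1], u : A → ℝ continuous with u(1) = 0, r > 0, ν ≥ 0, Δ > 0, σ ∈ (0,1], β > 0 with βΔ ≤ 1, V_{I_k} < 0, functions μ : Z → [0,1] and p : Z → [0,1] with p(z) ≤ βΔ for all z, and q : Z × Z → [0,1] with ∑_{z'} q(z,z') = 1 for every z. Let V_U ∈ ℝ^Z be the unique fixed point of the operator (TV)(z) = max over a ∈ A of { (1 − e^{−rΔ})·u(a) + e^{−rΔ}·∑_{z'} q(z,z')·[ (1 − σ·μ(z)·p(z)·a)·e^{−νΔ}·V(z') + σ·μ(z)·p(z)·a·V_{I_k} ] }. Then for every z ∈ Z, V_U(z) ≥ c₁·e^{νΔ}·V_{I_k}, where c₁ = σβΔ/(e^{(r+ν)Δ} − 1 + σβΔ). -/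
/-- Lower bound on the value function of unknown agents: the fixed point `V_U` of
the Bellman operator satisfies `V_U(z) ≥ c₁ e^{νΔ} V_{I_k}` where
`c₁ = σβΔ/(e^{(r+ν)Δ} - 1 + σβΔ)`. -/
theorem stmt_5 {Z : Type*} [Fintype Z] [Nonempty Z]
    (a0 : ℝ) (ha0 : a0 ∈ Set.Icc (0:ℝ) 1)
    (u : ℝ → ℝ) (hu : ContinuousOn u (Set.Icc a0 1)) (hu1 : u 1 = 0)
    (r ν Δ σ β : ℝ) (hr : 0 < r) (hν : 0 ≤ ν) (hΔ : 0 < Δ)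
    (hσ : σ ∈ Set.Ioc (0:ℝ) 1) (hβ : 0 < β) (hβΔ : β * Δ ≤ 1)
    (VIk : ℝ) (hVIk : VIk < 0)
    (μ p : Z → ℝ) (hμ : ∀ z, μ z ∈ Set.Icc (0:ℝ) 1) (hp : ∀ z, p z ∈ Set.Icc (0:ℝ) 1)
    (hpβ : ∀ z, p z ≤ β * Δ)
    (q : Z → Z → ℝ) (hq : ∀ z z', q z z' ∈ Set.Icc (0:ℝ) 1)
    (hq1 : ∀ z, ∑ z', q z z' = 1)
    (T : (Z → ℝ) → Z → ℝ)
    (hT : ∀ (V : Z → ℝ) (z : Z),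
      IsGreatest {y : ℝ | ∃ a ∈ Set.Icc a0 1,
        y = (1 - Real.exp (-(r*Δ))) * u a
          + Real.exp (-(r*Δ)) * ∑ z', q z z' *
              ((1 - σ * μ z * p z * a) * Real.exp (-(ν*Δ)) * V z'
                + σ * μ z * p z * a * VIk)} (T V z))
    (VU : Z → ℝ) (hfix : T VU = VU) :
    ∀ z, σ*β*Δ / (Real.exp ((r+ν)*Δ) - 1 + σ*β*Δ) * Real.exp (ν*Δ) * VIk ≤ VU z := by
  intro z
  obtain ⟨z₀, -, hz₀⟩ := Finset.exists_min_image Finset.univ VU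
    ⟨Classical.arbitrary Z, Finset.mem_univ _⟩
  set m := VU z₀ with hm
  set x := σ * μ z₀ * p z₀ with hxdef
  set s := σ * β * Δ with hsdef
  set E := Real.exp ((r+ν)*Δ) with hEdef
  have ha : (0:ℝ) < Real.exp (-(r*Δ)) := Real.exp_pos _
  have hb : (0:ℝ) < Real.exp (-(ν*Δ)) := Real.exp_pos _
  have heν : (0:ℝ) < Real.exp (ν*Δ) := Real.exp_pos _
  have hs : 0 < s := by
    have := hσ.1; positivity
  have hx0 : 0 ≤ x := by
    have := hσ.1.le; have := (hμ z₀).1; have := (hp z₀).1; positivity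
  have hxs : x ≤ s := by
    have h1 := (hμ z₀).2
    have h2 := hpβ z₀
    have h3 := (hp z₀).1
    have h4 := (hμ z₀).1
    have h5 := hσ.1
    rw [hxdef, hsdef]
    calc σ * μ z₀ * p z₀ ≤ σ * 1 * (β * Δ) := by
          apply mul_le_mul _ h2 h3 (by positivity)
          nlinarith
      _ = σ * β * Δ := by ring
  have hs1 : s ≤ 1 := by
    have := hσ.2
    have := hσ.1
    rw [hsdef]
    nlinarith
  have hx1 : x ≤ 1 := hxs.trans hs1
  have hE1 : (1:ℝ) < E := by
    have h := Real.add_one_le_exp ((r+ν)*Δ)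
    have : 0 < (r+ν)*Δ := by positivity
    rw [hEdef]
    linarith
  have hEab : E * (Real.exp (-(r*Δ)) * Real.exp (-(ν*Δ))) = 1 := by
    rw [hEdef, ← Real.exp_add, ← Real.exp_add,
      show (r+ν)*Δ + (-(r*Δ) + -(ν*Δ)) = 0 by ring, Real.exp_zero]
  have hEa : E * Real.exp (-(r*Δ)) = Real.exp (ν*Δ) := by
    rw [hEdef, ← Real.exp_add, show (r+ν)*Δ + -(r*Δ) = ν*Δ by ring]
  -- membership with a = 1
  have hmem := (hT VU z₀).2 ⟨1, ⟨ha0.2, le_rfl⟩, rfl⟩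
  rw [hfix] at hmem
  -- bound the sum below
  have hsum : (1 - x) * Real.exp (-(ν*Δ)) * m + x * VIk
      ≤ ∑ z', q z₀ z' * ((1 - x * 1) * Real.exp (-(ν*Δ)) * VU z' + x * 1 * VIk) := by
    have heq : (1 - x) * Real.exp (-(ν*Δ)) * m + x * VIk
        = ∑ z', q z₀ z' * ((1 - x * 1) * Real.exp (-(ν*Δ)) * m + x * 1 * VIk) := by
      rw [← Finset.sum_mul, hq1]; ring
    rw [heq]
    apply Finset.sum_le_sum
    intro z' _
    apply mul_le_mul_of_nonneg_left _ (hq z₀ z').1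
    have hmz := hz₀ z' (Finset.mem_univ z')
    nlinarith [mul_nonneg (mul_nonneg (by linarith : (0:ℝ) ≤ 1 - x) hb.le)
      (by linarith : (0:ℝ) ≤ VU z' - m)]
  have key : Real.exp (-(r*Δ)) * ((1 - x) * Real.exp (-(ν*Δ)) * m + x * VIk) ≤ m := by
    calc Real.exp (-(r*Δ)) * ((1 - x) * Real.exp (-(ν*Δ)) * m + x * VIk)
        ≤ (1 - Real.exp (-(r*Δ))) * u 1
          + Real.exp (-(r*Δ)) * ∑ z', q z₀ z' *
              ((1 - x * 1) * Real.exp (-(ν*Δ)) * VU z' + x * 1 * VIk) := by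
          rw [hu1]
          have := mul_le_mul_of_nonneg_left hsum ha.le
          linarith
      _ ≤ m := hmem
  -- main algebraic manipulation
  have h3 : (1-x)*m + Real.exp (ν*Δ) * (x*VIk) ≤ E * m := by
    have h := mul_le_mul_of_nonneg_left key (by positivity : (0:ℝ) ≤ E)
    calc (1-x)*m + Real.exp (ν*Δ) * (x*VIk)
        = E * (Real.exp (-(r*Δ)) * ((1 - x) * Real.exp (-(ν*Δ)) * m + x * VIk)) := by
          linear_combination (-((1-x)*m)) * hEab + (-(x*VIk)) * hEa
      _ ≤ E * m := h
  have h2 : Real.exp (ν*Δ) * x * VIk ≤ m * (E - 1 + x) := by nlinarith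
  have ht : 0 < E - 1 + x := by linarith
  have hD : 0 < E - 1 + s := by linarith
  have hfin : Real.exp (ν*Δ) * s * VIk * (E - 1 + x) ≤ m * (E - 1 + s) * (E - 1 + x) := by
    have hint1 := mul_le_mul_of_nonneg_right h2 hD.le
    have hint2 : 0 ≤ Real.exp (ν*Δ) * (-VIk) * (s - x) * (E - 1) := by
      apply mul_nonneg
      apply mul_nonneg
      apply mul_nonneg heν.le (by linarith)
      linarith
      linarith
    nlinarith
  have hmfin : s * Real.exp (ν*Δ) * VIk ≤ m * (E - 1 + s) := by
    have := le_of_mul_le_mul_right hfin ht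
    linarith
  have hmz : m ≤ VU z := hz₀ z (Finset.mem_univ z)
  rw [div_mul_eq_mul_div, div_mul_eq_mul_div, div_le_iff₀ hD]
  have hmul := mul_le_mul_of_nonneg_right hmz hD.le
  linarith
end

section
/- Let a̲ ∈ [0,1), A = [a̲,1], and let u : A → ℝ be twice continuously differentiable with u' > 0 and u'' < 0 on A. Define φ : ℝ → [a̲,1] by φ(x) = 1 if x ≤ u'(1), φ(x) = (u')^{-1}(x) if u'(1) < x < u'(a̲), and φ(x) = a̲ if x ≥ u'(a̲). Let r > 0, Δ > 0, σ ∈ (0,1], β > 0, μ ∈ [0,1], let a_I, a_U ∈ A and I_k, I_u ≥ 0, and set p = βΔ·(a_I·I_k + a_U·I_u) and I = I_k + I_u. Let V_{I_k} < 0 and E be real numbers with 0 < E ≤ −V_{I_k} (corresponding to E = E_z e^{−νΔ}V_U(z') − V_{I_k} with V_U ≤ 0). Define Ī = −((e^{rΔ} − 1)/Δ)·u'(1)/(σ·β·V_{I_k}) > 0. Then whenever I < Ī, the best response a* = φ(σ·μ·p·E/(e^{rΔ} − 1)) equals 1. -/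
/-! Since `φ = 1` on `(-∞, u'(1)]`, it suffices to show that the marginal infection cost
`σμpE/(e^{rΔ}-1)` is at most `u'(1)`. Bounding `μ`, `a_I`, `a_U` by `1` and `E` by
`-V_{I_k}` turns this into `σβΔ·I·(-V_{I_k}) < (e^{rΔ}-1)·u'(1)`, which is `I < Ī` cleared
of denominators. -/

lemma mul_add_mul_le_add_of_le_one {aI aU Ik Iu : ℝ} (haI : aI ≤ 1) (haU : aU ≤ 1)
    (hIk : 0 ≤ Ik) (hIu : 0 ≤ Iu) : aI * Ik + aU * Iu ≤ Ik + Iu :=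
  add_le_add (mul_le_of_le_one_left hIk haI) (mul_le_of_le_one_left hIu haU)

lemma mul_neg_lt_of_lt_neg_div_div {D Δ c I y : ℝ} (hΔ : 0 < Δ) (hc : c < 0)
    (h : I < -(D / Δ) * y / c) : Δ * I * (-c) < D * y := by
  rw [lt_div_iff_of_neg hc] at h
  have := mul_lt_mul_of_pos_left h hΔ
  field_simp at this
  linarith

lemma infection_cost_numerator_le {σ μ β Δ s I E V : ℝ} (hσ : 0 ≤ σ) (hβ : 0 ≤ β)
    (hΔ : 0 ≤ Δ) (hμ : μ ≤ 1) (hs : 0 ≤ s) (hsI : s ≤ I) (hE : 0 ≤ E) (hEV : E ≤ -V) :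
    σ * μ * (β * Δ * s) * E ≤ σ * β * Δ * I * (-V) := by
  have hsE : μ * (s * E) ≤ I * (-V) :=
    calc μ * (s * E) ≤ s * E := mul_le_of_le_one_left (by positivity) hμ
      _ ≤ I * (-V) := mul_le_mul hsI hEV hE (hs.trans hsI)
  calc σ * μ * (β * Δ * s) * E = σ * β * Δ * (μ * (s * E)) := by ring
    _ ≤ σ * β * Δ * (I * (-V)) := by gcongr
    _ = σ * β * Δ * I * (-V) := by ring

theorem stmt_8_general (a0 : ℝ) (ha0 : a0 ∈ Set.Ico (0:ℝ) 1)
    (u' : ℝ → ℝ)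
    (φ : ℝ → ℝ)
    (hφ1 : ∀ x : ℝ, x ≤ u' 1 → φ x = 1)
    (r Δ σ β μ : ℝ) (hr : 0 < r) (hΔ : 0 < Δ) (hσ : σ ∈ Set.Ioc (0:ℝ) 1)
    (hβ : 0 < β) (hμ : μ ∈ Set.Icc (0:ℝ) 1)
    (aI aU : ℝ) (haI : aI ∈ Set.Icc a0 1) (haU : aU ∈ Set.Icc a0 1)
    (Ik Iu : ℝ) (hIk : 0 ≤ Ik) (hIu : 0 ≤ Iu)
    (VIk E : ℝ) (hVIk : VIk < 0) (hE : 0 < E) (hEle : E ≤ -VIk)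
    (hI : Ik + Iu < -((Real.exp (r*Δ) - 1) / Δ) * u' 1 / (σ * β * VIk)) :
    φ (σ * μ * (β * Δ * (aI * Ik + aU * Iu)) * E / (Real.exp (r*Δ) - 1)) = 1 := by
  apply hφ1
  have hD : 0 < Real.exp (r * Δ) - 1 := sub_pos.mpr (Real.one_lt_exp_iff.mpr (mul_pos hr hΔ))
  have hthreshold :=
    mul_neg_lt_of_lt_neg_div_div hΔ (mul_neg_of_pos_of_neg (mul_pos hσ.1 hβ) hVIk) hI
  have hexposure : 0 ≤ aI * Ik + aU * Iu :=
    add_nonneg (mul_nonneg (ha0.1.trans haI.1) hIk) (mul_nonneg (ha0.1.trans haU.1) hIu)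
  rw [div_le_iff₀ hD]
  calc σ * μ * (β * Δ * (aI * Ik + aU * Iu)) * E
      ≤ σ * β * Δ * (Ik + Iu) * (-VIk) :=
        infection_cost_numerator_le hσ.1.le hβ.le hΔ.le hμ.2 hexposure
          (mul_add_mul_le_add_of_le_one haI.2 haU.2 hIk hIu) hE.le hEle
    _ ≤ u' 1 * (Real.exp (r * Δ) - 1) := by linarith

/-- Full activity with sufficiently low prevalence: if the prevalence
`I = I_k + I_u` is below the threshold `Ī = -((e^{rΔ}-1)/Δ)·u'(1)/(σβV_{I_k})`,
then the best response `a* = φ(σμpE/(e^{rΔ}-1))` equals `1`. -/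
theorem stmt_8 (a0 : ℝ) (ha0 : a0 ∈ Set.Ico (0:ℝ) 1)
    (u u' u'' : ℝ → ℝ)
    (hderiv : ∀ x ∈ Set.Icc a0 1, HasDerivWithinAt u (u' x) (Set.Icc a0 1) x)
    (hderiv2 : ∀ x ∈ Set.Icc a0 1, HasDerivWithinAt u' (u'' x) (Set.Icc a0 1) x)
    (hu''cont : ContinuousOn u'' (Set.Icc a0 1))
    (hu'pos : ∀ x ∈ Set.Icc a0 1, 0 < u' x)
    (hu''neg : ∀ x ∈ Set.Icc a0 1, u'' x < 0)
    (φ : ℝ → ℝ)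
    (hφ1 : ∀ x : ℝ, x ≤ u' 1 → φ x = 1)
    (hφ2 : ∀ x : ℝ, u' 1 < x → x < u' a0 → φ x ∈ Set.Ioo a0 1 ∧ u' (φ x) = x)
    (hφ3 : ∀ x : ℝ, u' a0 ≤ x → φ x = a0)
    (r Δ σ β μ : ℝ) (hr : 0 < r) (hΔ : 0 < Δ) (hσ : σ ∈ Set.Ioc (0:ℝ) 1)
    (hβ : 0 < β) (hμ : μ ∈ Set.Icc (0:ℝ) 1)
    (aI aU : ℝ) (haI : aI ∈ Set.Icc a0 1) (haU : aU ∈ Set.Icc a0 1)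
    (Ik Iu : ℝ) (hIk : 0 ≤ Ik) (hIu : 0 ≤ Iu)
    (VIk E : ℝ) (hVIk : VIk < 0) (hE : 0 < E) (hEle : E ≤ -VIk)
    (hI : Ik + Iu < -((Real.exp (r*Δ) - 1) / Δ) * u' 1 / (σ * β * VIk)) :
    φ (σ * μ * (β * Δ * (aI * Ik + aU * Iu)) * E / (Real.exp (r*Δ) - 1)) = 1 :=
  stmt_8_general a0 ha0 u' φ hφ1 r Δ σ β μ hr hΔ hσ hβ hμ aI aU haI haU Ik Iu hIk hIu VIk E hVIk hE
    hEle hI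
end

section
/- Let a̲ ∈ [0,1) and A = [a̲,1]. Let u : A → ℝ be twice continuously differentiable with u' > 0 and u'' < 0 on A. Let c₀ = 1 − e^{−rΔ} with r, Δ > 0, let C ≥ 0, I_k ≥ 0, I_u ≥ 0 be constants, and let a_I ∈ A. Define g(x) = c₀·u(x) − C·(a_I·I_k + x·I_u)·x for x ∈ A, and for a fixed a* ∈ A define f(x) = c₀·u(x) − C·(a_I·I_k + a*·I_u)·x. Assume a* maximizes f over A and let a† be the unique maximizer of the strictly concave function g over A. Then a*/2 ≤ a† ≤ a*. -/
/-!
Both maximizers are pinned down by their one-sided first-order conditions on `A`: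
`c₀ u'(a*) = C(a_I I_k + a* I_u)` and `c₀ u'(a†) = C(a_I I_k + 2 a† I_u)`, up to the inequalities
allowed at the endpoints. Since `u'` is strictly decreasing, `a† < a*/2` would force
`C I_u a* < 2 C I_u a†`, and `a* < a†` would force `2 C I_u a† < C I_u a*`; both contradict
`C I_u ≥ 0` and `a†, a* ≥ 0`.
-/

open Set

theorem IsMaxOn.hasDerivWithinAt_mul_sub_nonpos {φ : ℝ → ℝ} {s : Set ℝ} {p q d : ℝ}
    (hs : Convex ℝ s) (h : IsMaxOn φ s p) (hp : p ∈ s) (hq : q ∈ s)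
    (hd : HasDerivWithinAt φ d s p) : d * (q - p) ≤ 0 := by
  have hcone : q - p ∈ posTangentConeAt s p :=
    sub_mem_posTangentConeAt_of_segment_subset (hs.segment_subset hp hq)
  simpa [mul_comm] using h.localize.hasFDerivWithinAt_nonpos hd.hasFDerivWithinAt hcone

namespace IsMaxOn

variable {φ : ℝ → ℝ} {a b p d : ℝ}

theorem nonneg_of_hasDerivWithinAt_Icc (h : IsMaxOn φ (Icc a b) p) (hp : p ∈ Icc a b)
    (hd : HasDerivWithinAt φ d (Icc a b) p) (hap : a < p) : 0 ≤ d := by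
  have := h.hasDerivWithinAt_mul_sub_nonpos (convex_Icc a b) hp ⟨le_rfl, hp.1.trans hp.2⟩ hd
  nlinarith

theorem nonpos_of_hasDerivWithinAt_Icc (h : IsMaxOn φ (Icc a b) p) (hp : p ∈ Icc a b)
    (hd : HasDerivWithinAt φ d (Icc a b) p) (hpb : p < b) : d ≤ 0 := by
  have := h.hasDerivWithinAt_mul_sub_nonpos (convex_Icc a b) hp ⟨hp.1.trans hp.2, le_rfl⟩ hd
  nlinarith

end IsMaxOn

theorem Convex.strictAntiOn_of_hasDerivWithinAt_neg {s : Set ℝ} (hs : Convex ℝ s)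
    {f f' : ℝ → ℝ} (hf : ∀ x ∈ s, HasDerivWithinAt f (f' x) s x) (hf' : ∀ x ∈ s, f' x < 0) :
    StrictAntiOn f s :=
  _root_.strictAntiOn_of_hasDerivWithinAt_neg hs
    (fun x hx => (hf x hx).continuousWithinAt)
    (fun x hx => (hf x (interior_subset hx)).mono interior_subset)
    (fun x hx => hf' x (interior_subset hx))

section Objectives

variable {u : ℝ → ℝ} {s : Set ℝ} {x v : ℝ}

theorem HasDerivWithinAt.const_mul_sub_linear (hu : HasDerivWithinAt u v s x) (c K : ℝ) :
    HasDerivWithinAt (fun y => c * u y - K * y) (c * v - K) s x := by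
  have hx : HasDerivWithinAt (fun y => y) 1 s x := hasDerivWithinAt_id x s
  simpa using (hu.const_mul c).fun_sub (hx.const_mul K)

theorem HasDerivWithinAt.const_mul_sub_quadratic (hu : HasDerivWithinAt u v s x)
    (c C α β : ℝ) :
    HasDerivWithinAt (fun y => c * u y - C * (α + y * β) * y)
      (c * v - C * (α + 2 * x * β)) s x := by
  have hx : HasDerivWithinAt (fun y => y) 1 s x := hasDerivWithinAt_id x s
  exact ((hu.const_mul c).fun_sub (((hx.mul_const β).const_add α).const_mul C |>.fun_mul hx))
    |>.congr_deriv (by ring)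

end Objectives

theorem stmt_11_general (a0 : ℝ) (ha0 : a0 ∈ Set.Ico (0:ℝ) 1)
    (u u' u'' : ℝ → ℝ)
    (hderiv : ∀ x ∈ Set.Icc a0 1, HasDerivWithinAt u (u' x) (Set.Icc a0 1) x)
    (hderiv2 : ∀ x ∈ Set.Icc a0 1, HasDerivWithinAt u' (u'' x) (Set.Icc a0 1) x)
    (hu''neg : ∀ x ∈ Set.Icc a0 1, u'' x < 0)
    (r Δ C Ik Iu aI : ℝ) (hr : 0 < r) (hΔ : 0 < Δ) (hC : 0 ≤ C)
    (hIu : 0 ≤ Iu)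
    (astar adag : ℝ) (hastar : astar ∈ Set.Icc a0 1) (hadag : adag ∈ Set.Icc a0 1)
    -- `a*` maximizes `f(x) = c₀ u(x) - C(a_I I_k + a* I_u)x` over `A`
    (hf : ∀ x ∈ Set.Icc a0 1,
      (1 - Real.exp (-(r*Δ))) * u x - C * (aI*Ik + astar*Iu) * x ≤
      (1 - Real.exp (-(r*Δ))) * u astar - C * (aI*Ik + astar*Iu) * astar)
    -- `a†` maximizes `g(x) = c₀ u(x) - C(a_I I_k + x I_u)x` over `A`
    (hg : ∀ x ∈ Set.Icc a0 1,
      (1 - Real.exp (-(r*Δ))) * u x - C * (aI*Ik + x*Iu) * x ≤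
      (1 - Real.exp (-(r*Δ))) * u adag - C * (aI*Ik + adag*Iu) * adag) :
    astar / 2 ≤ adag ∧ adag ≤ astar := by
  set c₀ := 1 - Real.exp (-(r * Δ))
  have hc₀ : 0 < c₀ := sub_pos.2 (Real.exp_lt_one_iff.2 (by nlinarith))
  have hm : 0 ≤ C * Iu := mul_nonneg hC hIu
  have hanti : StrictAntiOn u' (Icc a0 1) :=
    (convex_Icc a0 1).strictAntiOn_of_hasDerivWithinAt_neg hderiv2 hu''neg
  have hf' := (hderiv astar hastar).const_mul_sub_linear c₀ (C * (aI * Ik + astar * Iu))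
  have hg' := (hderiv adag hadag).const_mul_sub_quadratic c₀ C (aI * Ik) Iu
  have hfmax : IsMaxOn (fun y => c₀ * u y - C * (aI * Ik + astar * Iu) * y) (Icc a0 1) astar :=
    hf
  have hgmax : IsMaxOn (fun y => c₀ * u y - C * (aI * Ik + y * Iu) * y) (Icc a0 1) adag := hg
  constructor
  · by_contra! hlt
    have hlt' : adag < astar := by linarith [hadag.1, ha0.1]
    have hfoc_f := hfmax.nonneg_of_hasDerivWithinAt_Icc hastar hf' (hadag.1.trans_lt hlt')
    have hfoc_g := hgmax.nonpos_of_hasDerivWithinAt_Icc hadag hg' (hlt'.trans_le hastar.2)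
    have hu' := hanti hadag hastar hlt'
    nlinarith
  · by_contra! hlt
    have hfoc_f := hfmax.nonpos_of_hasDerivWithinAt_Icc hastar hf' (hlt.trans_le hadag.2)
    have hfoc_g := hgmax.nonneg_of_hasDerivWithinAt_Icc hadag hg' (hastar.1.trans_lt hlt)
    have hu' := hanti hastar hadag hlt
    nlinarith [hadag.1, ha0.1]

/-- The static efficient lockdown action `a†` satisfies `a*/2 ≤ a† ≤ a*`,
where `a*` is the equilibrium action. -/
theorem stmt_11 (a0 : ℝ) (ha0 : a0 ∈ Set.Ico (0:ℝ) 1)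
    (u u' u'' : ℝ → ℝ)
    (hderiv : ∀ x ∈ Set.Icc a0 1, HasDerivWithinAt u (u' x) (Set.Icc a0 1) x)
    (hderiv2 : ∀ x ∈ Set.Icc a0 1, HasDerivWithinAt u' (u'' x) (Set.Icc a0 1) x)
    (hu''cont : ContinuousOn u'' (Set.Icc a0 1))
    (hu'pos : ∀ x ∈ Set.Icc a0 1, 0 < u' x)
    (hu''neg : ∀ x ∈ Set.Icc a0 1, u'' x < 0)
    (r Δ C Ik Iu aI : ℝ) (hr : 0 < r) (hΔ : 0 < Δ) (hC : 0 ≤ C)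
    (hIk : 0 ≤ Ik) (hIu : 0 ≤ Iu) (haI : aI ∈ Set.Icc a0 1)
    (astar adag : ℝ) (hastar : astar ∈ Set.Icc a0 1) (hadag : adag ∈ Set.Icc a0 1)
    -- `a*` maximizes `f(x) = c₀ u(x) - C(a_I I_k + a* I_u)x` over `A`
    (hf : ∀ x ∈ Set.Icc a0 1,
      (1 - Real.exp (-(r*Δ))) * u x - C * (aI*Ik + astar*Iu) * x ≤
      (1 - Real.exp (-(r*Δ))) * u astar - C * (aI*Ik + astar*Iu) * astar)
    -- `a†` maximizes `g(x) = c₀ u(x) - C(a_I I_k + x I_u)x` over `A`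
    (hg : ∀ x ∈ Set.Icc a0 1,
      (1 - Real.exp (-(r*Δ))) * u x - C * (aI*Ik + x*Iu) * x ≤
      (1 - Real.exp (-(r*Δ))) * u adag - C * (aI*Ik + adag*Iu) * adag)
    -- and `a†` is the unique such maximizer
    (hg_unique : ∀ x ∈ Set.Icc a0 1,
      (∀ y ∈ Set.Icc a0 1,
        (1 - Real.exp (-(r*Δ))) * u y - C * (aI*Ik + y*Iu) * y ≤
        (1 - Real.exp (-(r*Δ))) * u x - C * (aI*Ik + x*Iu) * x) → x = adag) :
    astar / 2 ≤ adag ∧ adag ≤ astar :=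
  stmt_11_general a0 ha0 u u' u'' hderiv hderiv2 hu''neg r Δ C Ik Iu aI hr hΔ hC hIu astar adag
    hastar hadag hf hg
end

section
/- Let a̲ ∈ [0,1) and A = [a̲,1]. Let u : A → ℝ be twice continuously differentiable with u' > 0 and u'' < 0 on A, and set m = min over a ∈ A of |u''(a)| > 0. Let c₀ = 1 − e^{−rΔ} with r, Δ > 0, let C ≥ 0, I_k ≥ 0, I_u ≥ 0 be constants, and let a_I ∈ A. Define g(x) = c₀·u(x) − C·(a_I·I_k + x·I_u)·x for x ∈ A, and for a fixed a* ∈ A define f(x) = c₀·u(x) − C·(a_I·I_k + a*·I_u)·x. Assume a* maximizes f over A and let a† be the unique maximizer of the strictly concave function g over A. Then c₀·m·(a* − a†) ≤ C·(2a† − a*)·I_u. In particular, the gap a* − a† between the equilibrium and static efficient actions is bounded above by a term proportional to the fraction I_u of unknown infected agents. -/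
/-!
If `a* ≤ a†` the left side is nonpositive and the right side nonnegative. Otherwise `a₀ < a*` and
`a† < 1`, so the one-sided first-order conditions read `c₀ u'(a*) ≥ C (a_I I_k + a* I_u)` and
`c₀ u'(a†) ≤ C (a_I I_k + 2 a† I_u)`. Subtracting them and using `u'(a†) - u'(a*) ≥ m (a* - a†)`,
which holds because `u'' ≤ -m`, gives the bound.
-/

open Set

lemma mul_sub_le_sub_of_hasDerivWithinAt_le_neg {D : Set ℝ} (hD : Convex ℝ D) {f f' : ℝ → ℝ}
    (hf : ∀ x ∈ D, HasDerivWithinAt f (f' x) D x) {m : ℝ} (hf' : ∀ x ∈ D, f' x ≤ -m)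
    {x y : ℝ} (hx : x ∈ D) (hy : y ∈ D) (hxy : x ≤ y) : m * (y - x) ≤ f x - f y := by
  have hanti : AntitoneOn (fun z => f z + m * z) D := by
    refine antitoneOn_of_hasDerivWithinAt_nonpos (f' := fun z => f' z + m) hD
      (fun z hz => (hf z hz).continuousWithinAt.add (continuousWithinAt_id.const_mul m))
      (fun z hz => ?_) (fun z hz => by linarith [hf' z (interior_subset hz)])
    exact (((hf z (interior_subset hz)).add ((hasDerivWithinAt_id z D).const_mul m)).mono
      interior_subset).congr_deriv (by ring)
  linarith [hanti hx hy hxy]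

section FirstOrder

variable {f : ℝ → ℝ} {f' a b x : ℝ}

lemma IsLocalMaxOn.hasDerivWithinAt_Icc_nonpos (hmax : IsLocalMaxOn f (Icc a b) x)
    (hf : HasDerivWithinAt f f' (Icc a b) x) (hax : a ≤ x) (hxb : x < b) : f' ≤ 0 := by
  have hcone : b - x ∈ posTangentConeAt (Icc a b) x :=
    sub_mem_posTangentConeAt_of_segment_subset
      ((segment_eq_Icc hxb.le).subset.trans (Icc_subset_Icc_left hax))
  have h := hmax.hasFDerivWithinAt_nonpos hf.hasFDerivWithinAt hcone
  rw [ContinuousLinearMap.toSpanSingleton_apply, smul_eq_mul] at h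
  exact nonpos_of_mul_nonpos_right h (sub_pos.mpr hxb)

lemma IsLocalMaxOn.hasDerivWithinAt_Icc_nonneg (hmax : IsLocalMaxOn f (Icc a b) x)
    (hf : HasDerivWithinAt f f' (Icc a b) x) (hax : a < x) (hxb : x ≤ b) : 0 ≤ f' := by
  have hcone : a - x ∈ posTangentConeAt (Icc a b) x :=
    sub_mem_posTangentConeAt_of_segment_subset
      ((segment_symm ℝ x a ▸ segment_eq_Icc hax.le).subset.trans (Icc_subset_Icc_right hxb))
  have h := hmax.hasFDerivWithinAt_nonpos hf.hasFDerivWithinAt hcone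
  rw [ContinuousLinearMap.toSpanSingleton_apply, smul_eq_mul] at h
  exact nonneg_of_mul_nonpos_right h (sub_neg.mpr hax)

end FirstOrder

theorem stmt_12_general (a0 : ℝ) (ha0 : a0 ∈ Set.Ico (0:ℝ) 1)
    (u u' u'' : ℝ → ℝ)
    (hderiv : ∀ x ∈ Set.Icc a0 1, HasDerivWithinAt u (u' x) (Set.Icc a0 1) x)
    (hderiv2 : ∀ x ∈ Set.Icc a0 1, HasDerivWithinAt u' (u'' x) (Set.Icc a0 1) x)
    (hu''neg : ∀ x ∈ Set.Icc a0 1, u'' x < 0)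
    (m : ℝ) (hm : IsLeast ((fun a => |u'' a|) '' Set.Icc a0 1) m)
    (r Δ C Ik Iu aI : ℝ) (hr : 0 < r) (hΔ : 0 < Δ) (hC : 0 ≤ C)
    (hIu : 0 ≤ Iu)
    (astar adag : ℝ) (hastar : astar ∈ Set.Icc a0 1) (hadag : adag ∈ Set.Icc a0 1)
    -- `a*` maximizes `f(x) = c₀ u(x) - C(a_I I_k + a* I_u)x` over `A`
    (hf : ∀ x ∈ Set.Icc a0 1,
      (1 - Real.exp (-(r*Δ))) * u x - C * (aI*Ik + astar*Iu) * x ≤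
      (1 - Real.exp (-(r*Δ))) * u astar - C * (aI*Ik + astar*Iu) * astar)
    -- `a†` maximizes `g(x) = c₀ u(x) - C(a_I I_k + x I_u)x` over `A`
    (hg : ∀ x ∈ Set.Icc a0 1,
      (1 - Real.exp (-(r*Δ))) * u x - C * (aI*Ik + x*Iu) * x ≤
      (1 - Real.exp (-(r*Δ))) * u adag - C * (aI*Ik + adag*Iu) * adag) :
    (1 - Real.exp (-(r*Δ))) * m * (astar - adag) ≤ C * (2*adag - astar) * Iu := by
  set c0 := 1 - Real.exp (-(r*Δ))
  have hc0 : 0 ≤ c0 := sub_nonneg.mpr (Real.exp_le_one_iff.mpr (by nlinarith))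
  have hm0 : 0 ≤ m := by
    obtain ⟨⟨a, -, rfl⟩, -⟩ := hm
    exact abs_nonneg _
  rcases le_or_gt astar adag with hle | hlt
  · calc c0 * m * (astar - adag) ≤ 0 :=
          mul_nonpos_of_nonneg_of_nonpos (mul_nonneg hc0 hm0) (sub_nonpos.mpr hle)
      _ ≤ C * (2*adag - astar) * Iu :=
          mul_nonneg (mul_nonneg hC (by linarith [ha0.1, hastar.1])) hIu
  have hmax_f : IsMaxOn (fun x => c0 * u x - C * (aI*Ik + astar*Iu) * x) (Icc a0 1) astar := hf
  have hmax_g : IsMaxOn (fun x => c0 * u x - C * (aI*Ik + x*Iu) * x) (Icc a0 1) adag := hg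
  have hid (x : ℝ) : HasDerivWithinAt (fun x => x) 1 (Icc a0 1) x :=
    (hasDerivAt_id' x).hasDerivWithinAt
  have hderiv_f : HasDerivWithinAt (fun x => c0 * u x - C * (aI*Ik + astar*Iu) * x)
      (c0 * u' astar - C * (aI*Ik + astar*Iu)) (Icc a0 1) astar :=
    (((hderiv astar hastar).const_mul c0).sub ((hid astar).const_mul _)).congr_deriv (by ring)
  have hderiv_g : HasDerivWithinAt (fun x => c0 * u x - C * (aI*Ik + x*Iu) * x)
      (c0 * u' adag - C * (aI*Ik + 2*adag*Iu)) (Icc a0 1) adag :=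
    (((hderiv adag hadag).const_mul c0).sub
      ((((hid adag).mul_const Iu).const_add (aI*Ik)).const_mul C |>.mul (hid adag))).congr_deriv
      (by ring)
  have hfoc_f : 0 ≤ c0 * u' astar - C * (aI*Ik + astar*Iu) :=
    hmax_f.localize.hasDerivWithinAt_Icc_nonneg hderiv_f (by linarith [hadag.1]) hastar.2
  have hfoc_g : c0 * u' adag - C * (aI*Ik + 2*adag*Iu) ≤ 0 :=
    hmax_g.localize.hasDerivWithinAt_Icc_nonpos hderiv_g hadag.1 (by linarith [hastar.2])
  have hu''_le : ∀ x ∈ Icc a0 1, u'' x ≤ -m := fun x hx => by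
    have : m ≤ |u'' x| := hm.2 ⟨x, hx, rfl⟩
    rw [abs_of_neg (hu''neg x hx)] at this
    linarith
  have hdecay : m * (astar - adag) ≤ u' adag - u' astar :=
    mul_sub_le_sub_of_hasDerivWithinAt_le_neg (convex_Icc a0 1) hderiv2 hu''_le hadag hastar
      hlt.le
  calc c0 * m * (astar - adag) = c0 * (m * (astar - adag)) := by ring
    _ ≤ c0 * (u' adag - u' astar) := mul_le_mul_of_nonneg_left hdecay hc0
    _ ≤ C * (2*adag - astar) * Iu := by linarith

/-- Upper bound on the gap between equilibrium and static efficient actions: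
`c₀ m (a* - a†) ≤ C (2a† - a*) I_u`, where `m = min_{a ∈ A} |u''(a)|`. -/
theorem stmt_12 (a0 : ℝ) (ha0 : a0 ∈ Set.Ico (0:ℝ) 1)
    (u u' u'' : ℝ → ℝ)
    (hderiv : ∀ x ∈ Set.Icc a0 1, HasDerivWithinAt u (u' x) (Set.Icc a0 1) x)
    (hderiv2 : ∀ x ∈ Set.Icc a0 1, HasDerivWithinAt u' (u'' x) (Set.Icc a0 1) x)
    (hu''cont : ContinuousOn u'' (Set.Icc a0 1))
    (hu'pos : ∀ x ∈ Set.Icc a0 1, 0 < u' x)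
    (hu''neg : ∀ x ∈ Set.Icc a0 1, u'' x < 0)
    (m : ℝ) (hm : IsLeast ((fun a => |u'' a|) '' Set.Icc a0 1) m)
    (r Δ C Ik Iu aI : ℝ) (hr : 0 < r) (hΔ : 0 < Δ) (hC : 0 ≤ C)
    (hIk : 0 ≤ Ik) (hIu : 0 ≤ Iu) (haI : aI ∈ Set.Icc a0 1)
    (astar adag : ℝ) (hastar : astar ∈ Set.Icc a0 1) (hadag : adag ∈ Set.Icc a0 1)
    -- `a*` maximizes `f(x) = c₀ u(x) - C(a_I I_k + a* I_u)x` over `A`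
    (hf : ∀ x ∈ Set.Icc a0 1,
      (1 - Real.exp (-(r*Δ))) * u x - C * (aI*Ik + astar*Iu) * x ≤
      (1 - Real.exp (-(r*Δ))) * u astar - C * (aI*Ik + astar*Iu) * astar)
    -- `a†` maximizes `g(x) = c₀ u(x) - C(a_I I_k + x I_u)x` over `A`
    (hg : ∀ x ∈ Set.Icc a0 1,
      (1 - Real.exp (-(r*Δ))) * u x - C * (aI*Ik + x*Iu) * x ≤
      (1 - Real.exp (-(r*Δ))) * u adag - C * (aI*Ik + adag*Iu) * adag)
    -- and `a†` is the unique such maximizer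
    (hg_unique : ∀ x ∈ Set.Icc a0 1,
      (∀ y ∈ Set.Icc a0 1,
        (1 - Real.exp (-(r*Δ))) * u y - C * (aI*Ik + y*Iu) * y ≤
        (1 - Real.exp (-(r*Δ))) * u x - C * (aI*Ik + x*Iu) * x) → x = adag) :
    (1 - Real.exp (-(r*Δ))) * m * (astar - adag) ≤ C * (2*adag - astar) * Iu :=
  stmt_12_general a0 ha0 u u' u'' hderiv hderiv2 hu''neg m hm r Δ C Ik Iu aI hr hΔ hC hIu astar adag
    hastar hadag hf hg
end

section
/- Let r > 0, Δ > 0, ν ≥ 0, σ ∈ (0,1], β > 0 with βΔ ≤ 1, and let μ ∈ [0,1] and p ∈ [0,1] with p ≤ βΔ. Define c₁ = σβΔ/(e^{(r+ν)Δ} − 1 + σβΔ). Then e^{−rΔ}·((1 − σ·μ·p)·c₁ + σ·μ·p) ≤ c₁·e^{νΔ}. -/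
/-!
Write `E = e^{(r+ν)Δ} ≥ 1`, `s = σβΔ`, `c₁ = s/(E - 1 + s)` and `q = σμp`. Since
`e^{νΔ} = e^{-rΔ} E`, the claim is `(1 - q) c₁ + q ≤ c₁ E`, i.e. `q (1 - c₁) ≤ c₁ (E - 1)`.
As `1 - c₁ = (E - 1)/(E - 1 + s)`, this is `(E - 1) q ≤ (E - 1) s`, which holds because
`q = σμp ≤ σp ≤ σβΔ = s`.
-/

open Real

theorem one_sub_mul_div_add_le_div_mul {E s q : ℝ} (hE : 1 ≤ E) (hs : 0 < s) (hqs : q ≤ s) :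
    (1 - q) * (s / (E - 1 + s)) + q ≤ s / (E - 1 + s) * E := by
  have hD : 0 < E - 1 + s := by linarith
  have hgap : s / (E - 1 + s) * E - ((1 - q) * (s / (E - 1 + s)) + q)
      = (E - 1) * (s - q) / (E - 1 + s) := by
    field_simp
    ring
  have : 0 ≤ (E - 1) * (s - q) / (E - 1 + s) :=
    div_nonneg (mul_nonneg (by linarith) (by linarith)) hD.le
  linarith

theorem stmt_17_general (r Δ ν σ β μ p : ℝ) (hr : 0 < r) (hΔ : 0 < Δ) (hν : 0 ≤ ν)
    (hσ : σ ∈ Set.Ioc (0:ℝ) 1) (hβ : 0 < β)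
    (hμ : μ ∈ Set.Icc (0:ℝ) 1) (hp : p ∈ Set.Icc (0:ℝ) 1) (hpβ : p ≤ β * Δ) :
    Real.exp (-(r*Δ)) *
        ((1 - σ*μ*p) * (σ*β*Δ / (Real.exp ((r+ν)*Δ) - 1 + σ*β*Δ)) + σ*μ*p)
      ≤ σ*β*Δ / (Real.exp ((r+ν)*Δ) - 1 + σ*β*Δ) * Real.exp (ν*Δ) := by
  have hE : 1 ≤ exp ((r + ν) * Δ) := one_le_exp (by positivity)
  have hs : 0 < σ * β * Δ := by have := hσ.1; positivity
  have hμp : μ * p ≤ β * Δ := (mul_le_of_le_one_left hp.1 hμ.2).trans hpβ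
  have hqs : σ * μ * p ≤ σ * β * Δ := by
    simpa only [mul_assoc] using mul_le_mul_of_nonneg_left hμp hσ.1.le
  calc exp (-(r * Δ)) *
        ((1 - σ*μ*p) * (σ*β*Δ / (exp ((r+ν)*Δ) - 1 + σ*β*Δ)) + σ*μ*p)
      ≤ exp (-(r * Δ)) * (σ*β*Δ / (exp ((r+ν)*Δ) - 1 + σ*β*Δ) * exp ((r+ν)*Δ)) :=
        mul_le_mul_of_nonneg_left (one_sub_mul_div_add_le_div_mul hE hs hqs) (exp_pos _).le
    _ = σ*β*Δ / (exp ((r+ν)*Δ) - 1 + σ*β*Δ) * exp (ν * Δ) := by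
        rw [mul_left_comm, ← exp_add]
        ring_nf

/-- Key inequality showing the Bellman operator preserves the lower bound set:
`e^{-rΔ}((1 - σμp)c₁ + σμp) ≤ c₁e^{νΔ}` where
`c₁ = σβΔ/(e^{(r+ν)Δ} - 1 + σβΔ)`. -/
theorem stmt_17 (r Δ ν σ β μ p : ℝ) (hr : 0 < r) (hΔ : 0 < Δ) (hν : 0 ≤ ν)
    (hσ : σ ∈ Set.Ioc (0:ℝ) 1) (hβ : 0 < β) (hβΔ : β * Δ ≤ 1)
    (hμ : μ ∈ Set.Icc (0:ℝ) 1) (hp : p ∈ Set.Icc (0:ℝ) 1) (hpβ : p ≤ β * Δ) :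
    Real.exp (-(r*Δ)) *
        ((1 - σ*μ*p) * (σ*β*Δ / (Real.exp ((r+ν)*Δ) - 1 + σ*β*Δ)) + σ*μ*p)
      ≤ σ*β*Δ / (Real.exp ((r+ν)*Δ) - 1 + σ*β*Δ) * Real.exp (ν*Δ) :=
  stmt_17_general r Δ ν σ β μ p hr hΔ hν hσ hβ hμ hp hpβ
end
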